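/- arXiv:2005.02718 — 2 statements merged into one kernel-verified Lean document; each statement's English description precedes it below -/
import Mathlib

section
/- Fix i ∈ {1,…,d}. Let f : ℝ^d → ℝ be a bounded C¹ function whose partial derivative ∂f/∂y_i is also bounded. If the limit lim_{R→∞} ⨍_{B_R} (∂f/∂y_i)(y) dy exists, then it equals 0. In particular, if A is an algebra with mean value on ℝ^d and f ∈ A is C¹ with ∂f/∂y_i ∈ A, then M(∂f/∂y_i) = 0. -/
/-!
Write `∂ᵥf` for the derivative of `f` in the direction `v`. By the fundamental theorem of calculus
and Fubini, the ball average of `f (· + v) - f` over `B_R` equals `∫₀¹ ⨍_{B_R} ∂ᵥf (· + s v) ds`.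
Ball averages of a bounded function are asymptotically translation invariant, because
`B_R(a) ∆ B_R` lies in an annulus whose volume is `o(|B_R|)`. Hence the left side tends to `0`,
while by dominated convergence in `s` the right side tends to the mean value of `∂ᵥf`.
-/

open MeasureTheory Filter Topology

noncomputable section

/-- Euclidean space `ℝ^d`. -/
abbrev E (d : ℕ) := EuclideanSpace ℝ (Fin d)

/-- Average of a function over the ball of radius `R` centered at the origin. -/
noncomputable def ballAvg {d : ℕ} (u : E d → ℝ) (R : ℝ) : ℝ :=
  ⨍ y in Metric.ball (0 : E d) R, u y

/-- `u` has mean value `m` : the ball averages converge to `m` as `R → ∞`. -/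
def HasMeanValue {d : ℕ} (u : E d → ℝ) (m : ℝ) : Prop :=
  Tendsto (ballAvg u) atTop (𝓝 m)

/-- The mean value `M(u)` (junk value if the limit does not exist). -/
noncomputable def meanValue {d : ℕ} (u : E d → ℝ) : ℝ :=
  limUnder atTop (ballAvg u)

/-- An algebra with mean value on `ℝ^d`: a closed subalgebra of BUC(ℝ^d) containing the
constants, translation invariant, all of whose elements possess a mean value. -/
structure AlgebraWMV (d : ℕ) where
  carrier : Set (E d → ℝ)
  bdd : ∀ u ∈ carrier, ∃ C : ℝ, ∀ x, |u x| ≤ C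
  uc : ∀ u ∈ carrier, UniformContinuous u
  const_mem : ∀ c : ℝ, (fun _ => c) ∈ carrier
  add_mem : ∀ u ∈ carrier, ∀ v ∈ carrier, u + v ∈ carrier
  mul_mem : ∀ u ∈ carrier, ∀ v ∈ carrier, u * v ∈ carrier
  smul_mem : ∀ (c : ℝ), ∀ u ∈ carrier, c • u ∈ carrier
  translate_mem : ∀ u ∈ carrier, ∀ a : E d, (fun x => u (x + a)) ∈ carrier
  closed' : ∀ (u : E d → ℝ) (g : ℕ → E d → ℝ), (∀ n, g n ∈ carrier) →
      TendstoUniformly g u atTop → u ∈ carrier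
  mean_exists : ∀ u ∈ carrier, ∃ m : ℝ, HasMeanValue u m

open Metric Set
open scoped ENNReal symmDiff

section SetIntegral

variable {α G : Type*} [MeasurableSpace α] {μ : Measure α} [NormedAddCommGroup G]
  [NormedSpace ℝ G] {f : α → G} {s t : Set α} {C : ℝ}

theorem norm_setAverage_le_of_norm_le (hs : μ s ≠ ∞) (hC0 : 0 ≤ C)
    (hC : ∀ x ∈ s, ‖f x‖ ≤ C) : ‖⨍ x in s, f x ∂μ‖ ≤ C := by
  rw [setAverage_eq, norm_smul, Real.norm_eq_abs, abs_inv, abs_of_nonneg measureReal_nonneg]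
  rcases eq_or_ne (μ.real s) 0 with h | h
  · simpa [h] using hC0
  calc (μ.real s)⁻¹ * ‖∫ x in s, f x ∂μ‖ ≤ (μ.real s)⁻¹ * (C * μ.real s) := by
        gcongr; exact norm_setIntegral_le_of_norm_le_const hs.lt_top hC
    _ = C := by field_simp

theorem norm_setIntegral_sub_setIntegral_le (hs : MeasurableSet s) (ht : MeasurableSet t)
    (hfs : IntegrableOn f s μ) (hft : IntegrableOn f t μ) (hst : μ (s ∆ t) ≠ ∞)
    (hC : ∀ x ∈ s ∆ t, ‖f x‖ ≤ C) :
    ‖∫ x in s, f x ∂μ - ∫ x in t, f x ∂μ‖ ≤ C * μ.real (s ∆ t) := by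
  have hst' : μ (s \ t) ≠ ∞ := ne_top_of_le_ne_top hst (measure_mono le_sup_left)
  have hts' : μ (t \ s) ≠ ∞ := ne_top_of_le_ne_top hst (measure_mono le_sup_right)
  have hsplit : ∫ x in s, f x ∂μ - ∫ x in t, f x ∂μ =
      ∫ x in s \ t, f x ∂μ - ∫ x in t \ s, f x ∂μ := by
    rw [← integral_inter_add_sdiff ht hfs, ← integral_inter_add_sdiff hs hft, inter_comm]
    abel
  rw [hsplit, Set.symmDiff_def, measureReal_union disjoint_sdiff_sdiff (ht.diff hs), mul_add]
  refine (norm_sub_le _ _).trans (add_le_add ?_ ?_)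
  · exact norm_setIntegral_le_of_norm_le_const hst'.lt_top fun x hx => hC x (Or.inl hx)
  · exact norm_setIntegral_le_of_norm_le_const hts'.lt_top fun x hx => hC x (Or.inr hx)

end SetIntegral

theorem Metric.ball_symmDiff_ball_subset {X : Type*} [PseudoMetricSpace X] (x y : X) (R : ℝ) :
    ball x R ∆ ball y R ⊆ ball y (R + dist x y) \ ball y (R - dist x y) := by
  have hxy := dist_nonneg (x := x) (y := y)
  rintro z (⟨hx, hy⟩ | ⟨hy, hx⟩) <;> simp only [mem_ball, Set.mem_sdiff, not_lt] at *
  · constructor <;> linarith [dist_triangle z x y]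
  · constructor <;> linarith [dist_triangle z y x, dist_comm x y]

section Haar

variable {F : Type*} [NormedAddCommGroup F] [MeasurableSpace F] [BorelSpace F]
  (μ : Measure F)

theorem setIntegral_ball_comp_add_right [μ.IsAddRightInvariant] {G : Type*} [NormedAddCommGroup G]
    [NormedSpace ℝ G] (u : F → G) (a : F) (R : ℝ) :
    ∫ y in ball 0 R, u (y + a) ∂μ = ∫ y in ball a R, u y ∂μ := by
  have hpre : (· + a) ⁻¹' ball a R = ball (0 : F) R := by
    ext y
    simp [dist_eq_norm]
  rw [← hpre]
  exact (measurePreserving_add_right μ a).setIntegral_preimage_emb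
    (MeasurableEquiv.addRight a).measurableEmbedding u (ball a R)

theorem tendsto_measureReal_ball_add_div_measureReal_ball [NormedSpace ℝ F]
    [FiniteDimensional ℝ F] [μ.IsAddHaarMeasure] (x : F) (c : ℝ) :
    Tendsto (fun R => μ.real (ball x (R + c)) / μ.real (ball x R)) atTop (𝓝 1) := by
  have hunit : μ.real (ball (0 : F) 1) ≠ 0 :=
    (ENNReal.toReal_pos (measure_ball_pos μ 0 one_pos).ne' measure_ball_lt_top.ne).ne'
  have hlim : Tendsto (fun R : ℝ => (1 + c / R) ^ Module.finrank ℝ F) atTop (𝓝 1) := by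
    simpa using ((tendsto_const_nhds.div_atTop (tendsto_id (α := ℝ))).const_add 1).pow
      (Module.finrank ℝ F)
  refine hlim.congr' ?_
  filter_upwards [eventually_gt_atTop 0, eventually_gt_atTop (-c)] with R hR hRc
  have hRc' : 0 < R + c := by linarith
  rw [measureReal_def, measureReal_def, Measure.addHaar_ball_of_pos μ x hR,
    Measure.addHaar_ball_of_pos μ x hRc', ENNReal.toReal_mul, ENNReal.toReal_mul,
    ENNReal.toReal_ofReal (pow_pos hR _).le, ENNReal.toReal_ofReal (pow_pos hRc' _).le,
    ← measureReal_def]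
  rw [one_add_div hR.ne', div_pow]
  field_simp

end Haar

theorem sub_eq_intervalIntegral_fderiv_add_smul {F G : Type*} [NormedAddCommGroup F]
    [NormedSpace ℝ F] [NormedAddCommGroup G] [NormedSpace ℝ G] [CompleteSpace G] {f : F → G}
    (hf : ContDiff ℝ 1 f) (x v : F) :
    f (x + v) - f x = ∫ s in (0 : ℝ)..1, fderiv ℝ f (x + s • v) v := by
  have hderiv : ∀ s ∈ uIcc (0 : ℝ) 1,
      HasDerivAt (fun t : ℝ => f (x + t • v)) (fderiv ℝ f (x + s • v) v) s := by
    intro s _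
    have hline : HasDerivAt (fun t : ℝ => x + t • v) v s := by
      simpa using ((hasDerivAt_id s).smul_const v).const_add x
    exact ((hf.differentiable one_ne_zero) _).hasFDerivAt.comp_hasDerivAt s hline
  have hcont : Continuous fun s : ℝ => fderiv ℝ f (x + s • v) v :=
    ((hf.continuous_fderiv one_ne_zero).comp (by fun_prop)).clm_apply continuous_const
  simpa using (intervalIntegral.integral_eq_sub_of_hasDerivAt hderiv
    (hcont.intervalIntegrable 0 1)).symm

section MeanValue

variable {d : ℕ}

theorem tendsto_ballAvg_comp_add_right_sub_ballAvg {u : E d → ℝ} {C : ℝ}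
    (hu : AEStronglyMeasurable u) (hC : ∀ x, |u x| ≤ C) (a : E d) :
    Tendsto (fun R => ballAvg (fun y => u (y + a)) R - ballAvg u R) atTop (𝓝 0) := by
  set V : ℝ → ℝ := fun r => volume.real (ball (0 : E d) r)
  have hC0 : 0 ≤ C := (abs_nonneg _).trans (hC 0)
  have hint : ∀ x R, IntegrableOn u (ball x R) :=
    fun x R => Measure.integrableOn_of_bounded measure_ball_lt_top.ne hu (ae_of_all _ hC)
  have hannulus : ∀ R, volume.real (ball a R ∆ ball 0 R) ≤ V (R + ‖a‖) - V (R - ‖a‖) := by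
    intro R
    rw [← measureReal_sdiff (ball_subset_ball (by linarith [norm_nonneg a])) measurableSet_ball
      measure_ball_lt_top.ne]
    simpa using measureReal_mono (ball_symmDiff_ball_subset a 0 R)
      (measure_ne_top_of_subset sdiff_subset measure_ball_lt_top.ne)
  have hbound : ∀ R, ‖ballAvg (fun y => u (y + a)) R - ballAvg u R‖ ≤
      C * (V (R + ‖a‖) / V R - V (R - ‖a‖) / V R) := by
    intro R
    have hdiff := norm_setIntegral_sub_setIntegral_le measurableSet_ball measurableSet_ball
      (hint a R) (hint 0 R) (measure_symmDiff_ne_top measure_ball_lt_top.ne measure_ball_lt_top.ne)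
      (fun x _ => hC x)
    calc ‖ballAvg (fun y => u (y + a)) R - ballAvg u R‖
        = (V R)⁻¹ * ‖(∫ y in ball a R, u y) - ∫ y in ball 0 R, u y‖ := by
          rw [ballAvg, ballAvg, setAverage_eq, setAverage_eq, setIntegral_ball_comp_add_right,
            ← smul_sub, norm_smul, Real.norm_eq_abs, abs_inv, abs_of_nonneg measureReal_nonneg]
      _ ≤ (V R)⁻¹ * (C * (V (R + ‖a‖) - V (R - ‖a‖))) := by
          gcongr
          exact hdiff.trans (mul_le_mul_of_nonneg_left (hannulus R) hC0)
      _ = C * (V (R + ‖a‖) / V R - V (R - ‖a‖) / V R) := by ring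
  have hminus := tendsto_measureReal_ball_add_div_measureReal_ball volume (0 : E d) (-‖a‖)
  simp only [← sub_eq_add_neg] at hminus
  have hlim := ((tendsto_measureReal_ball_add_div_measureReal_ball volume (0 : E d) ‖a‖).sub
    hminus).const_mul C
  exact squeeze_zero_norm hbound (by simpa using hlim)

theorem HasMeanValue.comp_add_right {u : E d → ℝ} {C : ℝ} (hu : AEStronglyMeasurable u)
    (hC : ∀ x, |u x| ≤ C) {m : ℝ} (hm : HasMeanValue u m) (a : E d) :
    HasMeanValue (fun y => u (y + a)) m := by
  unfold HasMeanValue at hm ⊢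
  simpa using (tendsto_ballAvg_comp_add_right_sub_ballAvg hu hC a).add hm

theorem ballAvg_comp_add_right_sub_ballAvg {f : E d → ℝ} (hf : ContDiff ℝ 1 f) (v : E d) (R : ℝ) :
    ballAvg (fun y => f (y + v)) R - ballAvg f R =
      ∫ s in (0 : ℝ)..1, ballAvg (fun y => fderiv ℝ f (y + s • v) v) R := by
  have hg : Continuous fun p : ℝ × E d => fderiv ℝ f (p.2 + p.1 • v) v :=
    ((hf.continuous_fderiv one_ne_zero).comp (by fun_prop)).clm_apply continuous_const
  have hint : ∀ {u : E d → ℝ}, Continuous u → IntegrableOn u (ball 0 R) := fun hu =>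
    hu.continuousOn.integrableOn_compact (isCompact_closedBall 0 R) |>.mono_set
      ball_subset_closedBall
  have hfubini : Integrable (Function.uncurry fun s y => fderiv ℝ f (y + s • v) v)
      ((volume.restrict (uIoc (0 : ℝ) 1)).prod (volume.restrict (ball (0 : E d) R))) := by
    rw [Measure.prod_restrict]
    exact (hg.continuousOn.integrableOn_compact (isCompact_Icc.prod (isCompact_closedBall 0 R)))
      |>.mono_set (prod_mono uIoc_subset_uIcc ball_subset_closedBall)
  simp only [ballAvg, setAverage_eq, smul_eq_mul, intervalIntegral.integral_const_mul, ← mul_sub]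
  congr 1
  rw [← integral_sub (hint (u := fun y => f (y + v)) (by fun_prop)) (hint hf.continuous),
    intervalIntegral_integral_swap hfubini]
  exact setIntegral_congr_fun measurableSet_ball fun y _ =>
    sub_eq_intervalIntegral_fderiv_add_smul hf y v

theorem tendsto_intervalIntegral_ballAvg_comp_add_smul {g : E d → ℝ} (hg : Continuous g) {C : ℝ}
    (hC : ∀ x, |g x| ≤ C) {L : ℝ} (hL : HasMeanValue g L) (v : E d) (a b : ℝ) :
    Tendsto (fun R => ∫ s in a..b, ballAvg (fun y => g (y + s • v)) R) atTop
      (𝓝 ((b - a) * L)) := by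
  have hC0 : 0 ≤ C := (abs_nonneg _).trans (hC 0)
  have hmeas : ∀ R, StronglyMeasurable fun s : ℝ => ballAvg (fun y => g (y + s • v)) R := by
    intro R
    simp only [ballAvg, setAverage_eq, smul_eq_mul]
    refine stronglyMeasurable_const.mul (StronglyMeasurable.integral_prod_right ?_)
    exact (hg.comp (by fun_prop : Continuous fun p : ℝ × E d => p.2 + p.1 • v)).stronglyMeasurable
  have hbound : ∀ R s : ℝ, ‖ballAvg (fun y => g (y + s • v)) R‖ ≤ C := fun R s =>
    norm_setAverage_le_of_norm_le measure_ball_lt_top.ne hC0 fun y _ => hC (y + s • v)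
  have hlim : ∀ s : ℝ, HasMeanValue (fun y => g (y + s • v)) L := fun s =>
    hL.comp_add_right hg.aestronglyMeasurable hC (s • v)
  simpa using intervalIntegral.tendsto_integral_filter_of_dominated_convergence (fun _ => C)
    (Eventually.of_forall fun R => (hmeas R).aestronglyMeasurable)
    (Eventually.of_forall fun R => ae_of_all _ fun s _ => hbound R s)
    (intervalIntegrable_const (μ := volume)) (ae_of_all _ fun s _ => hlim s)

theorem eq_zero_of_hasMeanValue_fderiv {f : E d → ℝ} (hf : ContDiff ℝ 1 f)
    (hfb : ∃ C, ∀ y, |f y| ≤ C) {v : E d} (hdb : ∃ C, ∀ y, |fderiv ℝ f y v| ≤ C) {L : ℝ}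
    (hL : HasMeanValue (fun y => fderiv ℝ f y v) L) : L = 0 := by
  obtain ⟨Cf, hCf⟩ := hfb
  obtain ⟨Cg, hCg⟩ := hdb
  have hg : Continuous fun y => fderiv ℝ f y v :=
    (hf.continuous_fderiv one_ne_zero).clm_apply continuous_const
  have hzero := tendsto_ballAvg_comp_add_right_sub_ballAvg hf.continuous.aestronglyMeasurable
    hCf v
  simp only [ballAvg_comp_add_right_sub_ballAvg hf] at hzero
  simpa using tendsto_nhds_unique
    (tendsto_intervalIntegral_ballAvg_comp_add_smul hg hCg hL v 0 1) hzero

end MeanValue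

/-- a bounded `C¹` function with bounded `i`-th partial derivative has
vanishing mean value of that partial derivative, whenever the mean value exists.
In particular, for `f` in an algebra with mean value `A`, `C¹` with `∂f/∂y_i ∈ A`,
one has `M(∂f/∂y_i) = 0`. -/
theorem meanValue_partialDeriv_eq_zero {d : ℕ} (i : Fin d) (f : E d → ℝ)
    (hfb : ∃ C : ℝ, ∀ y, |f y| ≤ C) (hf : ContDiff ℝ 1 f)
    (hdb : ∃ C : ℝ, ∀ y, |fderiv ℝ f y (EuclideanSpace.single i 1)| ≤ C)
    (L : ℝ) (hL : HasMeanValue (fun y => fderiv ℝ f y (EuclideanSpace.single i 1)) L) :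
    L = 0 ∧
      ∀ A : AlgebraWMV d, f ∈ A.carrier →
        (fun y => fderiv ℝ f y (EuclideanSpace.single i 1)) ∈ A.carrier →
        ∀ m : ℝ, HasMeanValue (fun y => fderiv ℝ f y (EuclideanSpace.single i 1)) m →
          m = 0 := by
  have hL0 : L = 0 := eq_zero_of_hasMeanValue_fderiv hf hfb hdb hL
  exact ⟨hL0, fun _ _ _ m hm => (tendsto_nhds_unique hm hL).trans hL0⟩
end
end

section
/- Let σ be a nonnegative bounded measurable kernel on ℝ^d × V × V satisfying the semi-detailed balance condition. Then the collision operator is dissipative: for almost every y ∈ ℝ^d and every measurable g : ℝ^d × V → ℝ with g(y,·) ∈ L²(V,μ), one has ∫_V g(y,v) Qg(y,v) dμ(v) ≤ 0. -/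
/-!
By Fubini, `∫ h(v) ∫ s(v,w) (h(w) - h(v)) dw dv` is a double integral, and semi-detailed balance
lets one trade the weight `h(w)²` for `h(v)²` under the kernel. Hence the quadratic form equals
`-½ ∬ s(v,w) (h(v) - h(w))²`, which is nonpositive for a nonnegative kernel. The theorem is this
with `s = σ(y,·,·)` and `h = g(y,·)` on `(V, μ)`, for every `y` at which the balance holds.
-/

open MeasureTheory Filter Topology

noncomputable section

/-- The collision operator `Qf(y,v) = ∫_V σ(y,v,w)(f(y,w) − f(y,v)) dμ(w)`. -/
noncomputable def Qop {d : ℕ} (μ : Measure (E d)) (V : Set (E d))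
    (σ : E d → E d → E d → ℝ) (f : E d → E d → ℝ) (y v : E d) : ℝ :=
  ∫ w in V, σ y v w * (f y w - f y v) ∂μ

/-- The adjoint collision operator `Q*φ(y,v) = ∫_V σ(y,w,v)(φ(y,w) − φ(y,v)) dμ(w)`. -/
noncomputable def Qadj {d : ℕ} (μ : Measure (E d)) (V : Set (E d))
    (σ : E d → E d → E d → ℝ) (φ : E d → E d → ℝ) (y v : E d) : ℝ :=
  ∫ w in V, σ y w v * (φ y w - φ y v) ∂μ

variable {α : Type*} [MeasurableSpace α] {ν : Measure α} {s : α → α → ℝ} {C : ℝ}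

theorem integrable_kernel_mul_prod (hs : AEStronglyMeasurable (Function.uncurry s) (ν.prod ν))
    (hsC : ∀ v w, ‖s v w‖ ≤ C) {F : α × α → ℝ} (hF : Integrable F (ν.prod ν)) :
    Integrable (fun p => s p.1 p.2 * F p) (ν.prod ν) :=
  hF.bdd_mul hs (ae_of_all _ fun p => hsC p.1 p.2)

variable [IsFiniteMeasure ν]

theorem integral_kernel_mul_snd_eq_mul_fst
    (hs : AEStronglyMeasurable (Function.uncurry s) (ν.prod ν)) (hsC : ∀ v w, ‖s v w‖ ≤ C)
    (hbal : ∀ᵐ v ∂ν, ∫ w, s v w ∂ν = ∫ w, s w v ∂ν) {g : α → ℝ} (hg : Integrable g ν) :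
    ∫ p, s p.1 p.2 * g p.2 ∂(ν.prod ν) = ∫ p, s p.1 p.2 * g p.1 ∂(ν.prod ν) := by
  have hsnd := integrable_kernel_mul_prod hs hsC (hg.comp_snd ν)
  have hfst := integrable_kernel_mul_prod hs hsC (hg.comp_fst ν)
  have hswap : Integrable (fun p => s p.2 p.1 * g p.1) (ν.prod ν) := hsnd.swap
  calc ∫ p, s p.1 p.2 * g p.2 ∂(ν.prod ν)
      = ∫ p, s p.2 p.1 * g p.1 ∂(ν.prod ν) := (integral_prod_swap _).symm
    _ = ∫ v, (∫ w, s w v ∂ν) * g v ∂ν := by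
      rw [integral_prod _ hswap]
      simp only [integral_mul_const]
    _ = ∫ v, (∫ w, s v w ∂ν) * g v ∂ν :=
      integral_congr_ae (hbal.mono fun v hv => by simp only [hv])
    _ = ∫ p, s p.1 p.2 * g p.1 ∂(ν.prod ν) := by
      rw [integral_prod _ hfst]
      simp only [integral_mul_const]

theorem integral_mul_integral_kernel_sub_eq
    (hs : AEStronglyMeasurable (Function.uncurry s) (ν.prod ν)) (hsC : ∀ v w, ‖s v w‖ ≤ C)
    (hbal : ∀ᵐ v ∂ν, ∫ w, s v w ∂ν = ∫ w, s w v ∂ν) {h : α → ℝ} (hh : MemLp h 2 ν) :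
    ∫ v, h v * ∫ w, s v w * (h w - h v) ∂ν ∂ν
      = -(1 / 2) * ∫ p, s p.1 p.2 * (h p.1 - h p.2) ^ 2 ∂(ν.prod ν) := by
  have h1 : Integrable h ν := hh.integrable one_le_two
  have hsq : Integrable (fun v => h v ^ 2) ν := hh.integrable_sq
  have hF : Integrable (fun p : α × α => h p.1 * (s p.1 p.2 * (h p.2 - h p.1))) (ν.prod ν) := by
    refine (integrable_kernel_mul_prod hs hsC ((h1.mul_prod h1).sub (hsq.comp_fst ν))).congr ?_
    exact ae_of_all _ fun p => by simp only [Pi.sub_apply]; ring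
  have hsnd := integrable_kernel_mul_prod hs hsC (hsq.comp_snd ν)
  have hfst := integrable_kernel_mul_prod hs hsC (hsq.comp_fst ν)
  have hdiff : Integrable (fun p => s p.1 p.2 * h p.2 ^ 2 - s p.1 p.2 * h p.1 ^ 2) (ν.prod ν) :=
    hsnd.sub hfst
  have hfubini : ∫ v, h v * ∫ w, s v w * (h w - h v) ∂ν ∂ν
      = ∫ p, h p.1 * (s p.1 p.2 * (h p.2 - h p.1)) ∂(ν.prod ν) := by
    simp only [integral_prod _ hF, integral_const_mul]
  have hsplit : ∫ p, s p.1 p.2 * (h p.1 - h p.2) ^ 2 ∂(ν.prod ν)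
      = (∫ p, s p.1 p.2 * h p.2 ^ 2 ∂(ν.prod ν)) - (∫ p, s p.1 p.2 * h p.1 ^ 2 ∂(ν.prod ν))
        - 2 * ∫ p, h p.1 * (s p.1 p.2 * (h p.2 - h p.1)) ∂(ν.prod ν) := by
    calc ∫ p, s p.1 p.2 * (h p.1 - h p.2) ^ 2 ∂(ν.prod ν)
        = ∫ p, (s p.1 p.2 * h p.2 ^ 2 - s p.1 p.2 * h p.1 ^ 2)
            - 2 * (h p.1 * (s p.1 p.2 * (h p.2 - h p.1))) ∂(ν.prod ν) := by
          congr 1 with p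
          ring
      _ = _ := by
          rw [integral_sub hdiff (hF.const_mul 2), integral_sub hsnd hfst,
            integral_const_mul]
  rw [hfubini, hsplit, integral_kernel_mul_snd_eq_mul_fst hs hsC hbal hsq]
  ring

theorem integral_mul_integral_kernel_sub_nonpos
    (hs : AEStronglyMeasurable (Function.uncurry s) (ν.prod ν))
    (hs0 : ∀ v w, 0 ≤ s v w) (hsC : ∀ v w, s v w ≤ C)
    (hbal : ∀ᵐ v ∂ν, ∫ w, s v w ∂ν = ∫ w, s w v ∂ν) {h : α → ℝ} (hh : MemLp h 2 ν) :
    ∫ v, h v * ∫ w, s v w * (h w - h v) ∂ν ∂ν ≤ 0 := by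
  have hsC' : ∀ v w, ‖s v w‖ ≤ C := fun v w => (Real.norm_of_nonneg (hs0 v w)).trans_le (hsC v w)
  rw [integral_mul_integral_kernel_sub_eq hs hsC' hbal hh]
  have hnonneg : 0 ≤ ∫ p, s p.1 p.2 * (h p.1 - h p.2) ^ 2 ∂(ν.prod ν) :=
    integral_nonneg fun p => mul_nonneg (hs0 _ _) (sq_nonneg _)
  linarith

theorem collision_dissipative_general {d : ℕ} (V : Set (E d))
    (μ : Measure (E d)) [IsFiniteMeasure μ]
    (σ : E d → E d → E d → ℝ)
    (hσmeas : Measurable fun p : E d × E d × E d => σ p.1 p.2.1 p.2.2)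
    (hσnn : ∀ y v w, 0 ≤ σ y v w) (hσbdd : ∃ C : ℝ, ∀ y v w, σ y v w ≤ C)
    (hbal : ∀ᵐ y : E d, ∀ᵐ v ∂(μ.restrict V),
        ∫ w in V, σ y v w ∂μ = ∫ w in V, σ y w v ∂μ) :
    ∀ᵐ y : E d, ∀ g : E d → E d → ℝ,
      Measurable (fun p : E d × E d => g p.1 p.2) →
      MemLp (g y) 2 (μ.restrict V) →
      ∫ v in V, g y v * Qop μ V σ g y v ∂μ ≤ 0 := by
  obtain ⟨C, hC⟩ := hσbdd
  filter_upwards [hbal] with y hy g _ hg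
  have hσy : Measurable (Function.uncurry (σ y)) :=
    hσmeas.comp (measurable_const.prodMk measurable_id)
  exact integral_mul_integral_kernel_sub_nonpos hσy.aestronglyMeasurable (hσnn y) (hC y) hy hg

/-- under the semi-detailed balance condition the collision operator is
dissipative: `∫_V g Qg dμ ≤ 0` for a.e. `y`. -/
theorem collision_dissipative {d : ℕ} (V : Set (E d)) (hV : IsCompact V)
    (μ : Measure (E d)) [IsFiniteMeasure μ] (hμV : μ Vᶜ = 0)
    (σ : E d → E d → E d → ℝ)
    (hσmeas : Measurable fun p : E d × E d × E d => σ p.1 p.2.1 p.2.2)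
    (hσnn : ∀ y v w, 0 ≤ σ y v w) (hσbdd : ∃ C : ℝ, ∀ y v w, σ y v w ≤ C)
    (hbal : ∀ᵐ y : E d, ∀ᵐ v ∂(μ.restrict V),
        ∫ w in V, σ y v w ∂μ = ∫ w in V, σ y w v ∂μ) :
    ∀ᵐ y : E d, ∀ g : E d → E d → ℝ,
      Measurable (fun p : E d × E d => g p.1 p.2) →
      MemLp (g y) 2 (μ.restrict V) →
      ∫ v in V, g y v * Qop μ V σ g y v ∂μ ≤ 0 :=
  collision_dissipative_general V μ σ hσmeas hσnn hσbdd hbal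
end
end
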